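/- If Y, Y' are i.i.d. non-negative random variables with E[Y] > 0, ess inf Y = 0, and p is strictly increasing with all relevant expectations finite, then E[p(Y')] < E[∫_Y^{Y+Y'} p(t) dt]/E[Y'], i.e., the zero-wait optimality condition fails. -/

import Mathlib

/-! Since `p` is strictly increasing, `∫_Y^{Y+Y'} p > p(Y)·Y'` whenever `Y' > 0`, and `Y' > 0` with
positive probability because `E[Y'] = E[Y] > 0`. Taking expectations and using the independence
of `Y` and `Y'`, `E[∫_Y^{Y+Y'} p] > E[p(Y)·Y'] = E[p(Y)]·E[Y'] = E[p(Y')]·E[Y']`. -/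

open MeasureTheory ProbabilityTheory

lemma Monotone.mul_le_intervalIntegral_add {p : ℝ → ℝ} (hp : Monotone p) (x : ℝ) {z : ℝ}
    (hz : 0 ≤ z) : p x * z ≤ ∫ t in x..x + z, p t := by
  have h := intervalIntegral.integral_mono_on (μ := volume) (le_add_of_nonneg_right (a := x) hz)
    intervalIntegrable_const hp.intervalIntegrable fun t ht => hp ht.1
  rwa [intervalIntegral.integral_const, smul_eq_mul, add_sub_cancel_left, mul_comm] at h

lemma StrictMono.mul_lt_intervalIntegral_add {p : ℝ → ℝ} (hp : StrictMono p) (x : ℝ) {z : ℝ}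
    (hz : 0 < z) : p x * z < ∫ t in x..x + z, p t := by
  have h := intervalIntegral.intervalIntegral_pos_of_pos_on
    (hp.monotone.intervalIntegrable.sub intervalIntegrable_const)
    (fun t ht => sub_pos.2 (hp ht.1)) (lt_add_of_pos_right x hz)
  rwa [intervalIntegral.integral_sub hp.monotone.intervalIntegrable intervalIntegrable_const,
    intervalIntegral.integral_const, smul_eq_mul, add_sub_cancel_left, sub_pos, mul_comm] at h

lemma integral_lt_integral_of_ae_le_of_measure_setOf_lt_pos {α : Type*} [MeasurableSpace α]
    {μ : Measure α} {f g : α → ℝ} (hf : Integrable f μ) (hg : Integrable g μ) (hle : f ≤ᵐ[μ] g)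
    (hlt : 0 < μ {x | f x < g x}) : ∫ x, f x ∂μ < ∫ x, g x ∂μ := by
  rw [← sub_pos, ← integral_sub hg hf, integral_pos_iff_support_of_nonneg_ae
    (hle.mono fun x hx => sub_nonneg.2 hx) (hg.sub hf)]
  exact hlt.trans_le (measure_mono fun x hx => (sub_pos.2 hx).ne')

theorem StrictMono.integral_mul_integral_lt_integral_intervalIntegral
    {Ω : Type*} [MeasurableSpace Ω] {μ : Measure Ω} {p : ℝ → ℝ} (hp : StrictMono p)
    (hpm : Measurable p) {X Z : Ω → ℝ} (hind : IndepFun X Z μ) (hZ : ∀ ω, 0 ≤ Z ω)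
    (hEZ : 0 < ∫ ω, Z ω ∂μ) (hpX : Integrable (fun ω => p (X ω)) μ) (hZi : Integrable Z μ)
    (hI : Integrable (fun ω => ∫ t in X ω..X ω + Z ω, p t) μ) :
    (∫ ω, p (X ω) ∂μ) * (∫ ω, Z ω ∂μ) < ∫ ω, (∫ t in X ω..X ω + Z ω, p t) ∂μ := by
  have hind' : IndepFun (fun ω => p (X ω)) Z μ := hind.comp hpm measurable_id
  rw [← hind'.integral_fun_mul_eq_mul_integral hpX.aestronglyMeasurable hZi.aestronglyMeasurable]
  refine integral_lt_integral_of_ae_le_of_measure_setOf_lt_pos (hind'.integrable_mul hpX hZi) hI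
    (.of_forall fun ω => hp.monotone.mul_le_intervalIntegral_add _ (hZ ω)) ?_
  rw [integral_pos_iff_support_of_nonneg hZ hZi] at hEZ
  exact hEZ.trans_le <| measure_mono fun ω hω =>
    hp.mul_lt_intervalIntegral_add _ ((hZ ω).lt_of_ne' hω)

theorem zero_wait_suboptimal_essinf_zero_general
    {Ω : Type*} [MeasurableSpace Ω] {μ : Measure Ω}
    (Y Y' : Ω → ℝ)
    (hnn' : ∀ ω, 0 ≤ Y' ω)
    (hiid : IdentDistrib Y Y' μ μ) (hind : IndepFun Y Y' μ)
    (hEY : 0 < ∫ ω, Y ω ∂μ)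
    (p : ℝ → ℝ) (hp : StrictMono p) (hpm : Measurable p)
    (hint₁ : Integrable (fun ω => Y ω) μ)
    (hint₂ : Integrable (fun ω => p (Y' ω)) μ)
    (hint₃ : Integrable (fun ω => ∫ t in (Y ω)..(Y ω + Y' ω), p t) μ) :
    (∫ ω, Y' ω ∂μ) * (∫ ω, p (Y' ω) ∂μ) <
      ∫ ω, (∫ t in (Y ω)..(Y ω + Y' ω), p t) ∂μ := by
  have hpY : IdentDistrib (fun ω => p (Y ω)) (fun ω => p (Y' ω)) μ μ := hiid.comp hpm
  rw [mul_comm, ← hpY.integral_eq]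
  exact hp.integral_mul_integral_lt_integral_intervalIntegral hpm hind hnn'
    (hiid.integral_eq ▸ hEY) (hpY.integrable_iff.2 hint₂) (hiid.integrable_iff.1 hint₁) hint₃

/-- If `Y, Y'` are i.i.d. non-negative random variables with `E[Y] > 0`
and `ess inf Y = 0` (i.e. `Pr[Y ≤ ε] > 0` for every `ε > 0`), and `p` is strictly
increasing with the relevant expectations finite, then
`E[Y']·E[p(Y')] < E[∫_Y^{Y+Y'} p(t) dt]`; i.e. the zero-wait optimality condition fails. -/
theorem zero_wait_suboptimal_essinf_zero
    {Ω : Type*} [MeasurableSpace Ω] {μ : Measure Ω} [IsProbabilityMeasure μ]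
    (Y Y' : Ω → ℝ) (hY : Measurable Y) (hY' : Measurable Y')
    (hnn : ∀ ω, 0 ≤ Y ω) (hnn' : ∀ ω, 0 ≤ Y' ω)
    (hiid : IdentDistrib Y Y' μ μ) (hind : IndepFun Y Y' μ)
    (hEY : 0 < ∫ ω, Y ω ∂μ)
    (hessinf : ∀ ε : ℝ, 0 < ε → 0 < μ {ω | Y ω ≤ ε})
    (p : ℝ → ℝ) (hp : StrictMono p) (hpm : Measurable p)
    (hint₁ : Integrable (fun ω => Y ω) μ)
    (hint₂ : Integrable (fun ω => p (Y' ω)) μ)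
    (hint₃ : Integrable (fun ω => ∫ t in (Y ω)..(Y ω + Y' ω), p t) μ) :
    (∫ ω, Y' ω ∂μ) * (∫ ω, p (Y' ω) ∂μ) <
      ∫ ω, (∫ t in (Y ω)..(Y ω + Y' ω), p t) ∂μ :=
  zero_wait_suboptimal_essinf_zero_general Y Y' hnn' hiid hind hEY p hp hpm hint₁ hint₂ hint₃
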